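/- Let h_j (j ∈ ℕ) and h be caloric functions on ℝ^{n+1} (n ≥ 1) with h_j(0̄) = h(0̄) = 0, and suppose h_j → h uniformly on every compact subset of ℝ^{n+1}. Then the associated caloric measures converge weakly: ∫ f dω_{h_j} → ∫ f dω_h for every continuous compactly supported f : ℝ^{n+1} → ℝ. -/

import Mathlib

open MeasureTheory Filter
open scoped NNReal ENNReal

noncomputable def timeDeriv {n : ℕ} (h : EuclideanSpace ℝ (Fin n) × ℝ → ℝ)
    (p : EuclideanSpace ℝ (Fin n) × ℝ) : ℝ :=
  deriv (fun s => h (p.1, s)) p.2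

noncomputable def spaceLaplacian {n : ℕ} (h : EuclideanSpace ℝ (Fin n) × ℝ → ℝ)
    (p : EuclideanSpace ℝ (Fin n) × ℝ) : ℝ :=
  ∑ i : Fin n, fderiv ℝ
    (fun x => fderiv ℝ (fun y => h (y, p.2)) x (EuclideanSpace.single i 1)) p.1
    (EuclideanSpace.single i 1)

def IsCaloricOn {n : ℕ} (h : EuclideanSpace ℝ (Fin n) × ℝ → ℝ)
    (U : Set (EuclideanSpace ℝ (Fin n) × ℝ)) : Prop :=
  ContDiffOn ℝ (⊤ : ℕ∞) h U ∧ ∀ p ∈ U, spaceLaplacian h p = timeDeriv h p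
def IsCaloricMeasureOf {n : ℕ} (h : EuclideanSpace ℝ (Fin n) × ℝ → ℝ)
    (ω : MeasureTheory.Measure (EuclideanSpace ℝ (Fin n) × ℝ)) : Prop :=
  MeasureTheory.IsFiniteMeasureOnCompacts ω ∧
  ∀ φ : EuclideanSpace ℝ (Fin n) × ℝ → ℝ, ContDiff ℝ (⊤ : ℕ∞) φ → HasCompactSupport φ →
    ∫ p, φ p ∂ω = (1 / 2) * ∫ p, |h p| * (spaceLaplacian φ p + timeDeriv φ p)

def WeakConvSeq {n : ℕ} (μs : ℕ → Measure (EuclideanSpace ℝ (Fin n) × ℝ))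
    (ν : Measure (EuclideanSpace ℝ (Fin n) × ℝ)) : Prop :=
  ∀ f : EuclideanSpace ℝ (Fin n) × ℝ → ℝ, Continuous f → HasCompactSupport f →
    Tendsto (fun i => ∫ p, f p ∂(μs i)) atTop (nhds (∫ p, f p ∂ν))

/-!
Testing the defining identity of `ω_h` against a smooth compactly supported `φ` gives
`∫ φ dω_{h_j} = ½ ∫ |h_j| (Δφ + ∂ₜφ)`, which tends to `½ ∫ |h| (Δφ + ∂ₜφ) = ∫ φ dω_h` because
`|h_j| → |h|` uniformly on the compact support of `Δφ + ∂ₜφ`. A continuous compactly supported `f`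
is approximated by `ψ g`, with `g` smooth and uniformly `δ`-close to `f` and `ψ` a bump equal to one
on the support of `f`; then `|f - ψ g| ≤ δ ψ`, and the masses `∫ ψ dω_{h_j}` stay bounded since
they converge.
-/

open Topology

section PartialDerivatives

variable {E F G : Type*} [NormedAddCommGroup E] [NormedSpace ℝ E] [NormedAddCommGroup F]
  [NormedSpace ℝ F] [NormedAddCommGroup G] [NormedSpace ℝ G] {φ : E × F → G}

theorem fderiv_comp_prodMk_left_apply {x : E} {t : F} (hφ : DifferentiableAt ℝ φ (x, t))
    (v : E) : fderiv ℝ (fun y => φ (y, t)) x v = fderiv ℝ φ (x, t) (v, 0) :=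
  congrArg (· v) (hφ.hasFDerivAt.comp x (hasFDerivAt_prodMk_left (𝕜 := ℝ) x t)).fderiv

theorem deriv_comp_prodMk_right {φ : E × ℝ → G} {x : E} {t : ℝ}
    (hφ : DifferentiableAt ℝ φ (x, t)) :
    deriv (fun s => φ (x, s)) t = fderiv ℝ φ (x, t) (0, 1) := by
  rw [← fderiv_apply_one_eq_deriv]
  exact congrArg (· 1) (hφ.hasFDerivAt.comp t (hasFDerivAt_prodMk_right x t)).fderiv

end PartialDerivatives

section HeatOperator

variable {n : ℕ} {φ : EuclideanSpace ℝ (Fin n) × ℝ → ℝ}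

theorem timeDeriv_eq_fderiv (hφ : Differentiable ℝ φ) :
    timeDeriv φ = fun p => fderiv ℝ φ p (0, 1) :=
  funext fun p => deriv_comp_prodMk_right (hφ p)

theorem spaceLaplacian_eq_sum_fderiv (hφ : ContDiff ℝ 2 φ) :
    spaceLaplacian φ = fun p => ∑ i : Fin n,
      fderiv ℝ (fun q => fderiv ℝ φ q (EuclideanSpace.single i 1, 0)) p
        (EuclideanSpace.single i 1, 0) := by
  funext p
  refine Finset.sum_congr rfl fun i _ => ?_
  have hφ' : ContDiff ℝ 1 (fun q => fderiv ℝ φ q (EuclideanSpace.single i 1, 0)) :=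
    (hφ.fderiv_right (by norm_num)).clm_apply contDiff_const
  simp only [fderiv_comp_prodMk_left_apply (hφ.differentiable (by norm_num) _)]
  exact fderiv_comp_prodMk_left_apply (hφ'.differentiable one_ne_zero _) _

theorem continuous_timeDeriv (hφ : ContDiff ℝ 1 φ) : Continuous (timeDeriv φ) := by
  rw [timeDeriv_eq_fderiv (hφ.differentiable one_ne_zero)]
  exact (hφ.continuous_fderiv one_ne_zero).clm_apply continuous_const

theorem continuous_spaceLaplacian (hφ : ContDiff ℝ 2 φ) : Continuous (spaceLaplacian φ) := by
  rw [spaceLaplacian_eq_sum_fderiv hφ]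
  refine continuous_finsetSum _ fun i _ => ?_
  have hφ' : ContDiff ℝ 1 (fun q => fderiv ℝ φ q (EuclideanSpace.single i 1, 0)) :=
    (hφ.fderiv_right (by norm_num)).clm_apply contDiff_const
  exact (hφ'.continuous_fderiv one_ne_zero).clm_apply continuous_const

theorem hasCompactSupport_timeDeriv (hφ : Differentiable ℝ φ) (hc : HasCompactSupport φ) :
    HasCompactSupport (timeDeriv φ) := by
  rw [timeDeriv_eq_fderiv hφ]
  exact hc.fderiv_apply ℝ _

theorem hasCompactSupport_spaceLaplacian (hφ : ContDiff ℝ 2 φ) (hc : HasCompactSupport φ) :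
    HasCompactSupport (spaceLaplacian φ) := by
  rw [spaceLaplacian_eq_sum_fderiv hφ]
  refine HasCompactSupport.intro hc fun p hp => Finset.sum_eq_zero fun i _ => ?_
  set v : EuclideanSpace ℝ (Fin n) × ℝ := (EuclideanSpace.single i 1, 0)
  have hsub : tsupport (fun p => fderiv ℝ (fun q => fderiv ℝ φ q v) p v) ⊆ tsupport φ :=
    (tsupport_fderiv_apply_subset ℝ v).trans (tsupport_fderiv_apply_subset ℝ v)
  exact image_eq_zero_of_notMem_tsupport (f := fun p => fderiv ℝ (fun q => fderiv ℝ φ q v) p v)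
    (Set.notMem_subset hsub hp)

end HeatOperator

section WeakConvergence

open scoped ContDiff

variable {ι X : Type*} {l : Filter ι}

theorem tendsto_integral_mul_of_tendstoUniformlyOn [TopologicalSpace X] [MeasurableSpace X]
    [OpensMeasurableSpace X] {μ : Measure X} [IsFiniteMeasureOnCompacts μ] [l.IsCountablyGenerated]
    {F : ι → X → ℝ} {f g : X → ℝ} (hF : ∀ i, Continuous (F i)) (hf : Continuous f)
    (hg : Continuous g) (hgc : HasCompactSupport g) (hlim : TendstoUniformlyOn F f l (tsupport g)) :
    Tendsto (fun i => ∫ x, F i x * g x ∂μ) l (𝓝 (∫ x, f x * g x ∂μ)) := by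
  obtain ⟨C, hC⟩ := hgc.isCompact.bddAbove_image hf.norm.continuousOn
  have hFC : ∀ᶠ i in l, ∀ x ∈ tsupport g, ‖F i x‖ ≤ C + 1 :=
    (uniformContinuous_norm.comp_tendstoUniformlyOn hlim).eventually_forall_le (lt_add_one C)
      (by simpa [upperBounds] using hC)
  refine tendsto_integral_filter_of_dominated_convergence (fun x => (C + 1) * ‖g x‖)
    (.of_forall fun i => ((hF i).mul hg).aestronglyMeasurable) ?_
    ((continuous_const.mul hg.norm).integrable_of_hasCompactSupport hgc.norm.mul_left)
    (.of_forall fun x => ?_)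
  · filter_upwards [hFC] with i hi
    refine .of_forall fun x => ?_
    by_cases hx : x ∈ tsupport g
    · rw [norm_mul]
      exact mul_le_mul_of_nonneg_right (hi x hx) (norm_nonneg _)
    · simp [image_eq_zero_of_notMem_tsupport hx]
  · by_cases hx : x ∈ tsupport g
    · exact (hlim.tendsto_at hx).mul_const _
    · simpa [image_eq_zero_of_notMem_tsupport hx] using tendsto_const_nhds

theorem abs_integral_sub_le_of_abs_sub_le_mul [MeasurableSpace X] {μ : Measure X} {f φ ψ : X → ℝ}
    {δ : ℝ} (hf : Integrable f μ) (hφ : Integrable φ μ) (hψ : Integrable ψ μ)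
    (hle : ∀ x, |f x - φ x| ≤ δ * ψ x) :
    |∫ x, f x ∂μ - ∫ x, φ x ∂μ| ≤ δ * ∫ x, ψ x ∂μ := by
  rw [← integral_sub hf hφ, ← integral_const_mul]
  exact norm_integral_le_of_norm_le (hψ.const_mul δ)
    (.of_forall fun x => (Real.norm_eq_abs _).trans_le (hle x))

variable {E : Type*} [NormedAddCommGroup E] [NormedSpace ℝ E] [FiniteDimensional ℝ E]

theorem exists_contDiff_hasCompactSupport_abs_sub_le_mul {f : E → ℝ} (hf : Continuous f)
    (hfc : HasCompactSupport f) :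
    ∃ ψ : E → ℝ, ContDiff ℝ ∞ ψ ∧ HasCompactSupport ψ ∧ 0 ≤ ψ ∧ ∀ δ > 0,
      ∃ φ : E → ℝ, ContDiff ℝ ∞ φ ∧ HasCompactSupport φ ∧ ∀ x, |f x - φ x| ≤ δ * ψ x := by
  obtain ⟨R, hR, hfR⟩ := hfc.isBounded.subset_closedBall_lt 0 0
  let ψ : ContDiffBump (0 : E) := ⟨R, R + 1, hR, lt_add_one R⟩
  refine ⟨ψ, ψ.contDiff, ψ.hasCompactSupport, ψ.nonneg', fun δ hδ => ?_⟩
  obtain ⟨g, hg, hgf⟩ := (hfc.uniformContinuous_of_continuous hf).exists_contDiff_dist_le hδ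
  refine ⟨fun x => ψ x * g x, ψ.contDiff.mul hg, ψ.hasCompactSupport.mul_right, fun x => ?_⟩
  have hgf' : |f x - g x| ≤ δ := by
    rw [abs_sub_comm, ← Real.dist_eq]
    exact (hgf x).le
  by_cases hx : x ∈ tsupport f
  · simpa [ψ.one_of_mem_closedBall (hfR hx)] using hgf'
  · rw [image_eq_zero_of_notMem_tsupport hx, zero_sub] at hgf' ⊢
    rw [abs_neg, abs_mul, abs_of_nonneg ψ.nonneg, mul_comm]
    exact mul_le_mul_of_nonneg_right (by simpa using hgf') ψ.nonneg

theorem tendsto_integral_of_tendsto_integral_contDiff [MeasurableSpace E] [BorelSpace E]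
    {μs : ι → Measure E} {μ : Measure E} [∀ i, IsFiniteMeasureOnCompacts (μs i)]
    [IsFiniteMeasureOnCompacts μ]
    (h : ∀ φ : E → ℝ, ContDiff ℝ ∞ φ → HasCompactSupport φ →
      Tendsto (fun i => ∫ x, φ x ∂μs i) l (𝓝 (∫ x, φ x ∂μ)))
    {f : E → ℝ} (hf : Continuous f) (hfc : HasCompactSupport f) :
    Tendsto (fun i => ∫ x, f x ∂μs i) l (𝓝 (∫ x, f x ∂μ)) := by
  obtain ⟨ψ, hψ, hψc, hψ0, happrox⟩ := exists_contDiff_hasCompactSupport_abs_sub_le_mul hf hfc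
  set M := ∫ x, ψ x ∂μ + 1
  have hM : 0 < M := (integral_nonneg hψ0).trans_lt (lt_add_one _)
  have hψM : ∀ᶠ i in l, ∫ x, ψ x ∂μs i < M :=
    (h ψ hψ hψc).eventually (gt_mem_nhds (lt_add_one _))
  rw [Metric.tendsto_nhds]
  intro ε hε
  obtain ⟨φ, hφ, hφc, hfφ⟩ := happrox (ε / (4 * M)) (by positivity)
  have herr : ∀ ν : Measure E, IsFiniteMeasureOnCompacts ν →
      |∫ x, f x ∂ν - ∫ x, φ x ∂ν| ≤ ε / (4 * M) * ∫ x, ψ x ∂ν := fun ν _ =>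
    abs_integral_sub_le_of_abs_sub_le_mul (hf.integrable_of_hasCompactSupport hfc)
      (hφ.continuous.integrable_of_hasCompactSupport hφc)
      (hψ.continuous.integrable_of_hasCompactSupport hψc) hfφ
  have hscale : ∀ a ≤ M, ε / (4 * M) * a ≤ ε / 4 := fun a ha =>
    calc ε / (4 * M) * a ≤ ε / (4 * M) * M := by gcongr
      _ = ε / 4 := by field_simp
  filter_upwards [hψM, Metric.tendsto_nhds.mp (h φ hφ hφc) (ε / 2) (half_pos hε)] with i hiM hiφ
  have hi := (herr (μs i) inferInstance).trans (hscale _ hiM.le)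
  have hlim := (herr μ inferInstance).trans (hscale _ (lt_add_one _).le)
  rw [Real.dist_eq] at hiφ ⊢
  rw [abs_le] at hi hlim
  rw [abs_lt] at hiφ ⊢
  constructor <;> linarith

end WeakConvergence

theorem IsCaloricOn.continuous {n : ℕ} {u : EuclideanSpace ℝ (Fin n) × ℝ → ℝ}
    (hu : IsCaloricOn u Set.univ) : Continuous u :=
  continuousOn_univ.mp hu.1.continuousOn

theorem caloricMeasures_weak_convergence_general {n : ℕ}
    (hs : ℕ → EuclideanSpace ℝ (Fin n) × ℝ → ℝ) (h : EuclideanSpace ℝ (Fin n) × ℝ → ℝ)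
    (hcals : ∀ j, IsCaloricOn (hs j) Set.univ) (hcal : IsCaloricOn h Set.univ)
    (hconv : ∀ K : Set (EuclideanSpace ℝ (Fin n) × ℝ), IsCompact K →
      TendstoUniformlyOn (fun j => hs j) h atTop K)
    (ωs : ℕ → Measure (EuclideanSpace ℝ (Fin n) × ℝ))
    (ω : Measure (EuclideanSpace ℝ (Fin n) × ℝ))
    (hωs : ∀ j, IsCaloricMeasureOf (hs j) (ωs j)) (hω : IsCaloricMeasureOf h ω) :
    WeakConvSeq ωs ω := by
  have := hω.1
  have := fun j => (hωs j).1
  intro f hf hfc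
  refine tendsto_integral_of_tendsto_integral_contDiff (fun φ hφ hφc => ?_) hf hfc
  have hφ2 : ContDiff ℝ 2 φ := hφ.of_le (by norm_cast)
  have hL : Continuous (fun p => spaceLaplacian φ p + timeDeriv φ p) :=
    (continuous_spaceLaplacian hφ2).add (continuous_timeDeriv (hφ2.of_le one_le_two))
  have hLc : HasCompactSupport (fun p => spaceLaplacian φ p + timeDeriv φ p) :=
    (hasCompactSupport_spaceLaplacian hφ2 hφc).add
      (hasCompactSupport_timeDeriv (hφ2.differentiable two_ne_zero) hφc)
  have habs : TendstoUniformlyOn (fun j p => |hs j p|) (fun p => |h p|) atTop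
      (tsupport fun p => spaceLaplacian φ p + timeDeriv φ p) :=
    Real.uniformContinuous_abs.comp_tendstoUniformlyOn (hconv _ hLc)
  simp only [(hωs _).2 φ hφ hφc, hω.2 φ hφ hφc]
  exact (tendsto_integral_mul_of_tendstoUniformlyOn (fun j => (hcals j).continuous.abs)
    hcal.continuous.abs hL hLc habs).const_mul _

/-- If caloric functions `h_j` vanishing at the origin converge to `h`
uniformly on compact sets, then the associated caloric measures converge weakly. -/
theorem caloricMeasures_weak_convergence {n : ℕ} (hn : 1 ≤ n)
    (hs : ℕ → EuclideanSpace ℝ (Fin n) × ℝ → ℝ) (h : EuclideanSpace ℝ (Fin n) × ℝ → ℝ)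
    (hcals : ∀ j, IsCaloricOn (hs j) Set.univ) (hcal : IsCaloricOn h Set.univ)
    (h0s : ∀ j, hs j 0 = 0) (h0 : h 0 = 0)
    (hconv : ∀ K : Set (EuclideanSpace ℝ (Fin n) × ℝ), IsCompact K →
      TendstoUniformlyOn (fun j => hs j) h atTop K)
    (ωs : ℕ → Measure (EuclideanSpace ℝ (Fin n) × ℝ))
    (ω : Measure (EuclideanSpace ℝ (Fin n) × ℝ))
    (hωs : ∀ j, IsCaloricMeasureOf (hs j) (ωs j)) (hω : IsCaloricMeasureOf h ω) :
    WeakConvSeq ωs ω :=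
  caloricMeasures_weak_convergence_general hs h hcals hcal hconv ωs ω hωs hω
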